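/- Let n ≥ 2 and for each i = 1, …, n let a_i = (a_{i,1}, …, a_{i,n}) ∈ ℝⁿ satisfy 0 < ∑_{j=1}^{n} |a_{i,j}| < 1, with A_i the companion matrix of a_i, and set T_i = A_i A_{i−1} ⋯ A_1. Then for every i with 1 ≤ i ≤ n−1 and every row index j with 1 ≤ j ≤ n: the ℓ¹ norm of the j-th row of T_i, namely ∑_{k=1}^{n} |(T_i)_{j,k}|, equals 1 if j ≤ n−i and is strictly less than 1 if j ≥ n−i+1; moreover every row of T_n has ℓ¹ norm strictly less than 1. -/
import Mathlib


open Finset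

/-- The companion matrix of a vector `a = (a 0, …, a (n-1))` (representing
`(a_{1}, …, a_{n})` in 1-indexed notation): superdiagonal of ones, last row
`(-a_n, -a_{n-1}, …, -a_1)`. -/
def companion (n : ℕ) (a : Fin n → ℝ) : Matrix (Fin n) (Fin n) ℝ :=
  Matrix.of fun j k =>
    if (j : ℕ) = n - 1 then -a k.rev
    else if (k : ℕ) = (j : ℕ) + 1 then 1 else 0

/-- `prodDesc A k = A k * A (k-1) * ⋯ * A 1`. -/
def prodDesc {m : ℕ} (A : ℕ → Matrix (Fin m) (Fin m) ℝ) : ℕ → Matrix (Fin m) (Fin m) ℝ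
  | 0 => 1
  | k + 1 => A (k + 1) * prodDesc A k

/-- The operator norm induced by the ℓ∞ norm: the maximum over rows of the ℓ¹ norm of
the row. -/
noncomputable def rowSumNorm {m : ℕ} (M : Matrix (Fin m) (Fin m) ℝ) : ℝ :=
  ⨆ j : Fin m, ∑ k : Fin m, |M j k|


private lemma companion_mul_apply_lt {n : ℕ} (a : Fin n → ℝ) (M : Matrix (Fin n) (Fin n) ℝ)
    (j : Fin n) (hj : (j : ℕ) + 1 < n) (k : Fin n) :
    (companion n a * M) j k = M ⟨(j : ℕ) + 1, hj⟩ k := by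
  have hj' : (j : ℕ) ≠ n - 1 := by omega
  simp only [Matrix.mul_apply, companion, Matrix.of_apply, hj', if_false]
  rw [Finset.sum_eq_single (⟨(j : ℕ) + 1, hj⟩ : Fin n)]
  · simp
  · intro l _ hl
    have : (l : ℕ) ≠ (j : ℕ) + 1 := fun h => hl (Fin.ext h)
    simp [this]
  · simp

private lemma companion_mul_apply_last {n : ℕ} (a : Fin n → ℝ) (M : Matrix (Fin n) (Fin n) ℝ)
    (j : Fin n) (hj : (j : ℕ) = n - 1) (k : Fin n) :
    (companion n a * M) j k = ∑ l : Fin n, (-a l.rev) * M l k := by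
  simp [Matrix.mul_apply, companion, hj]

private lemma key {n : ℕ} (hn : 2 ≤ n) (a : ℕ → Fin n → ℝ)
    (ha : ∀ i : ℕ, 1 ≤ i → i ≤ n →
      0 < ∑ j : Fin n, |a i j| ∧ ∑ j : Fin n, |a i j| < 1) :
    ∀ i : ℕ, i ≤ n →
      (∀ j : Fin n, (j : ℕ) + i < n →
        ∑ k : Fin n, |prodDesc (fun l => companion n (a l)) i j k| = 1) ∧
      (∀ j : Fin n, n ≤ (j : ℕ) + i →
        ∑ k : Fin n, |prodDesc (fun l => companion n (a l)) i j k| < 1) := by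
  intro i
  induction i with
  | zero =>
    intro _
    constructor
    · intro j _
      simp [prodDesc, Matrix.one_apply, apply_ite abs]
    · intro j hj
      exact absurd hj (by omega)
  | succ i ih =>
    intro hin
    obtain ⟨ih1, ih2⟩ := ih (by omega)
    set T := prodDesc (fun l => companion n (a l)) i with hT
    have hle : ∀ l : Fin n, ∑ k : Fin n, |T l k| ≤ 1 := by
      intro l
      rcases lt_or_ge ((l : ℕ) + i) n with h | h
      · exact (ih1 l h).le
      · exact (ih2 l h).le
    have hstep : prodDesc (fun l => companion n (a l)) (i + 1)
        = companion n (a (i + 1)) * T := rfl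
    constructor
    · intro j hj
      have hj1 : (j : ℕ) + 1 < n := by omega
      have : ∀ k, prodDesc (fun l => companion n (a l)) (i + 1) j k
          = T ⟨(j : ℕ) + 1, hj1⟩ k := by
        intro k
        rw [hstep]
        exact companion_mul_apply_lt _ _ _ hj1 k
      simp only [this]
      exact ih1 ⟨(j : ℕ) + 1, hj1⟩ (by simp; omega)
    · intro j hj
      by_cases hjn : (j : ℕ) = n - 1
      · calc ∑ k : Fin n, |prodDesc (fun l => companion n (a l)) (i + 1) j k|
            = ∑ k : Fin n, |∑ l : Fin n, (-a (i + 1) l.rev) * T l k| := by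
              refine Finset.sum_congr rfl fun k _ => ?_
              rw [hstep, companion_mul_apply_last _ _ _ hjn]
          _ ≤ ∑ k : Fin n, ∑ l : Fin n, |a (i + 1) l.rev| * |T l k| := by
              refine Finset.sum_le_sum fun k _ => ?_
              refine (Finset.abs_sum_le_sum_abs _ _).trans (le_of_eq ?_)
              exact Finset.sum_congr rfl fun l _ => by rw [abs_mul, abs_neg]
          _ = ∑ l : Fin n, |a (i + 1) l.rev| * ∑ k : Fin n, |T l k| := by
              rw [Finset.sum_comm]
              exact Finset.sum_congr rfl fun l _ => (Finset.mul_sum _ _ _).symm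
          _ ≤ ∑ l : Fin n, |a (i + 1) l.rev| * 1 :=
              Finset.sum_le_sum fun l _ =>
                mul_le_mul_of_nonneg_left (hle l) (abs_nonneg _)
          _ = ∑ l : Fin n, |a (i + 1) l.rev| := by simp
          _ = ∑ l : Fin n, |a (i + 1) l| :=
              Equiv.sum_comp Fin.revPerm (fun l => |a (i + 1) l|)
          _ < 1 := (ha (i + 1) (by omega) hin).2
      · have hj1 : (j : ℕ) + 1 < n := by
          have := j.isLt; omega
        have : ∀ k, prodDesc (fun l => companion n (a l)) (i + 1) j k
            = T ⟨(j : ℕ) + 1, hj1⟩ k := by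
          intro k
          rw [hstep]
          exact companion_mul_apply_lt _ _ _ hj1 k
        simp only [this]
        exact ih2 ⟨(j : ℕ) + 1, hj1⟩ (by simp; omega)

/-- The inductive row-norm claim (equations (35)–(36)) from the proof of Lemma 5 of the
paper (Appendix F). Rows are 1-indexed in the paper; here the row of 1-indexed index
`(j : ℕ) + 1` is the row `j : Fin n`. -/
theorem stmt_15 (n : ℕ) (hn : 2 ≤ n) (a : ℕ → Fin n → ℝ)
    (ha : ∀ i : ℕ, 1 ≤ i → i ≤ n →
      0 < ∑ j : Fin n, |a i j| ∧ ∑ j : Fin n, |a i j| < 1) :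
    (∀ i : ℕ, 1 ≤ i → i ≤ n - 1 → ∀ j : Fin n,
      ((j : ℕ) + 1 ≤ n - i →
        ∑ k : Fin n, |prodDesc (fun l => companion n (a l)) i j k| = 1) ∧
      (n - i + 1 ≤ (j : ℕ) + 1 →
        ∑ k : Fin n, |prodDesc (fun l => companion n (a l)) i j k| < 1)) ∧
    (∀ j : Fin n,
      ∑ k : Fin n, |prodDesc (fun l => companion n (a l)) n j k| < 1) := by
  constructor
  · intro i hi1 hi2 j
    obtain ⟨h1, h2⟩ := key hn a ha i (by omega)
    exact ⟨fun h => h1 j (by omega), fun h => h2 j (by omega)⟩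
  · intro j
    exact (key hn a ha n le_rfl).2 j (by omega)
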